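/- The map g is topologically transitive on [−1,1]: for every pair of nonempty open sets U, V ⊆ [−1,1] there exists a positive integer n such that gⁿ(U) ∩ V ≠ ∅. -/

import Mathlib

/-!
On `[0,1]` the map `g` is `x ↦ -x`, and on `[-1,0]` the square `g ∘ g` is conjugate, via
`x ↦ -x`, to the tent map `T` on `[0,1]`. The tent map sends each dyadic interval of level
`n + 1` onto one of level `n`, so `Tⁿ` maps every dyadic interval of level `n` onto `[0,1]`.
A nonempty open subset of `[-1,1]` contains a nondegenerate interval, which after at most one
application of `g` lies in `[-1,0]` and contains the negative of a dyadic interval; hence some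
iterate `gᴺ(U)` contains `[-1,0]`, so that `gᴺ⁺¹(U) ⊇ [0,1]` and `gᴺ⁺²(U) ⊇ [-1,0]`.
-/

open Filter

/-- The map `g : [-1,1] → [-1,1]` given by `g(x) = 2x + 2` on `[-1,-1/2]`,
`g(x) = -2x` on `[-1/2,0]`, and `g(x) = -x` on `[0,1]`. -/
noncomputable def gMap (x : ℝ) : ℝ :=
  if x ≤ -(1 / 2) then 2 * x + 2 else if x ≤ 0 then -2 * x else -x

open Set
open scoped Pointwise

lemma exists_Icc_subset_inter_of_isOpen {α : Type*} [TopologicalSpace α] [LinearOrder α]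
    [OrderTopology α] [DenselyOrdered α] {a b : α} (hab : a < b) {U : Set α} (hU : IsOpen U)
    (hne : (Icc a b ∩ U).Nonempty) : ∃ c d, c < d ∧ Icc c d ⊆ Icc a b ∩ U := by
  obtain ⟨u, huI, huU⟩ := hne
  have : Nontrivial α := ⟨a, b, hab.ne⟩
  have hu : u ∈ closure (Ioo a b) := by rwa [closure_Ioo hab.ne]
  obtain ⟨p, q, hpq, hpqW⟩ :=
    (hU.inter isOpen_Ioo).exists_Ioo_subset ((mem_closure_iff.1 hu) U hU huU)
  obtain ⟨c, hpc, hcq⟩ := exists_between hpq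
  obtain ⟨d, hcd, hdq⟩ := exists_between hcq
  refine ⟨c, d, hcd, fun x hx => ?_⟩
  obtain ⟨hxU, hxI⟩ := hpqW ⟨hpc.trans_le hx.1, hx.2.trans_lt hdq⟩
  exact ⟨Ioo_subset_Icc_self hxI, hxU⟩

noncomputable def tent (x : ℝ) : ℝ := if x ≤ 1 / 2 then 2 * x else 2 - 2 * x

lemma tent_mapsTo : MapsTo tent (Icc 0 1) (Icc 0 1) := by
  rintro x ⟨h0, h1⟩
  unfold tent
  split_ifs <;> constructor <;> linarith

lemma tent_half {y : ℝ} (hy : y ≤ 1) : tent (y / 2) = y := by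
  unfold tent
  rw [if_pos (by linarith)]
  ring

lemma tent_one_sub_half {y : ℝ} (hy : y ≤ 1) : tent (1 - y / 2) = y := by
  unfold tent
  split_ifs <;> linarith

lemma Icc_subset_image_tent_half {a b : ℝ} (hb : b ≤ 1) :
    Icc a b ⊆ tent '' Icc (a / 2) (b / 2) :=
  fun y hy => ⟨y / 2, ⟨by linarith [hy.1], by linarith [hy.2]⟩, tent_half (hy.2.trans hb)⟩

lemma Icc_subset_image_tent_one_sub_half {a b : ℝ} (hb : b ≤ 1) :
    Icc a b ⊆ tent '' Icc (1 - b / 2) (1 - a / 2) :=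
  fun y hy =>
    ⟨1 - y / 2, ⟨by linarith [hy.2], by linarith [hy.1]⟩, tent_one_sub_half (hy.2.trans hb)⟩

def dyadicIcc (n k : ℕ) : Set ℝ := Icc (k / 2 ^ n) ((k + 1) / 2 ^ n)

lemma dyadicIcc_right_le_one {n k : ℕ} (hk : k < 2 ^ n) : ((k : ℝ) + 1) / 2 ^ n ≤ 1 := by
  rw [div_le_one (by positivity)]
  exact_mod_cast hk

lemma dyadicIcc_subset_image_tent_of_lt {n k : ℕ} (hk : k < 2 ^ n) :
    dyadicIcc n k ⊆ tent '' dyadicIcc (n + 1) k := by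
  have h := Icc_subset_image_tent_half (a := k / 2 ^ n) (dyadicIcc_right_le_one hk)
  rwa [div_div, div_div, ← pow_succ] at h

lemma dyadicIcc_subset_image_tent_of_add_eq {n j k : ℕ} (hj : j < 2 ^ n)
    (hjk : j + k + 1 = 2 ^ (n + 1)) : dyadicIcc n j ⊆ tent '' dyadicIcc (n + 1) k := by
  have hk : (k : ℝ) = 2 ^ (n + 1) - 1 - j := by
    rw [eq_sub_iff_add_eq, eq_sub_iff_add_eq]
    have : k + j + 1 = 2 ^ (n + 1) := by omega
    exact_mod_cast this
  unfold dyadicIcc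
  convert Icc_subset_image_tent_one_sub_half (a := j / 2 ^ n) (dyadicIcc_right_le_one hj)
    using 3 <;>
    rw [hk, pow_succ] <;> field_simp <;> ring

lemma exists_dyadicIcc_subset_image_tent {n k : ℕ} (hk : k < 2 ^ (n + 1)) :
    ∃ j < 2 ^ n, dyadicIcc n j ⊆ tent '' dyadicIcc (n + 1) k := by
  by_cases hkn : k < 2 ^ n
  · exact ⟨k, hkn, dyadicIcc_subset_image_tent_of_lt hkn⟩
  · have h2 : 2 ^ (n + 1) = 2 * 2 ^ n := pow_succ' 2 n
    exact ⟨2 ^ (n + 1) - 1 - k, by omega,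
      dyadicIcc_subset_image_tent_of_add_eq (by omega) (by omega)⟩

lemma Icc_subset_image_tent_iterate_dyadicIcc :
    ∀ {n k : ℕ}, k < 2 ^ n → Icc 0 1 ⊆ tent^[n] '' dyadicIcc n k
  | 0, k, hk => by
    obtain rfl : k = 0 := by omega
    simp [dyadicIcc]
  | n + 1, k, hk => by
    obtain ⟨j, hj, hjk⟩ := exists_dyadicIcc_subset_image_tent hk
    rw [Function.iterate_succ, image_comp]
    exact (Icc_subset_image_tent_iterate_dyadicIcc hj).trans (image_mono hjk)

lemma exists_dyadicIcc_subset_Icc {a b : ℝ} (ha : 0 ≤ a) (hab : a < b) :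
    ∃ n k : ℕ, dyadicIcc n k ⊆ Icc a b := by
  obtain ⟨n, hn⟩ := pow_unbounded_of_one_lt (2 / (b - a)) one_lt_two
  have hpos : (0 : ℝ) < 2 ^ n := by positivity
  have hwide : a * 2 ^ n + 2 < b * 2 ^ n := by
    rw [div_lt_iff₀ (sub_pos.2 hab)] at hn
    linarith
  set k := ⌈a * 2 ^ n⌉₊
  have hk₁ : a * 2 ^ n ≤ k := Nat.le_ceil _
  have hk₂ : (k : ℝ) < a * 2 ^ n + 1 := Nat.ceil_lt_add_one (by positivity)
  refine ⟨n, k, Icc_subset_Icc ?_ ?_⟩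
  · rwa [le_div_iff₀ hpos]
  · rw [div_le_iff₀ hpos]
    linarith

lemma exists_Icc_subset_image_tent_iterate {a b : ℝ} (ha : 0 ≤ a) (hab : a < b) (hb : b ≤ 1) :
    ∃ n, Icc 0 1 ⊆ tent^[n] '' Icc a b := by
  obtain ⟨n, k, hsub⟩ := exists_dyadicIcc_subset_Icc ha hab
  have hk : k < 2 ^ n := by
    have : ((k : ℝ) + 1) / 2 ^ n ≤ 1 :=
      (hsub (right_mem_Icc.2 (by gcongr; linarith))).2.trans hb
    rw [div_le_one (by positivity)] at this
    exact_mod_cast (by linarith : (k : ℝ) < 2 ^ n)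
  exact ⟨n, (Icc_subset_image_tent_iterate_dyadicIcc hk).trans (image_mono hsub)⟩

lemma gMap_of_nonneg {x : ℝ} (hx : 0 ≤ x) : gMap x = -x := by
  unfold gMap
  split_ifs <;> linarith

lemma image_gMap_Icc_of_nonneg {c d : ℝ} (hc : 0 ≤ c) : gMap '' Icc c d = Icc (-d) (-c) := by
  rw [← neg_Icc, ← image_neg_eq_neg]
  exact image_congr fun x hx => gMap_of_nonneg (hc.trans hx.1)

lemma Icc_zero_one_subset_image_gMap : Icc 0 1 ⊆ gMap '' Icc (-1) 0 := by
  rintro y ⟨h0, h1⟩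
  exact ⟨-y / 2, ⟨by linarith, by linarith⟩, by unfold gMap; split_ifs <;> linarith⟩

lemma gMap_gMap_neg {x : ℝ} (hx : x ∈ Icc 0 1) : gMap (gMap (-x)) = -tent x := by
  obtain ⟨h0, h1⟩ := hx
  unfold gMap tent
  split_ifs <;> linarith

lemma gMap_iterate_two_mul_neg (n : ℕ) {x : ℝ} (hx : x ∈ Icc 0 1) :
    gMap^[2 * n] (-x) = -tent^[n] x := by
  induction n generalizing x with
  | zero => rfl
  | succ n ih =>
    rw [show 2 * (n + 1) = 2 * n + 2 by ring, Function.iterate_add_apply,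
      Function.iterate_succ_apply', Function.iterate_one, gMap_gMap_neg hx, ih (tent_mapsTo hx),
      Function.iterate_succ_apply]

lemma image_gMap_iterate_two_mul_neg (n : ℕ) {S : Set ℝ} (hS : S ⊆ Icc 0 1) :
    gMap^[2 * n] '' (-S) = -(tent^[n] '' S) := by
  rw [← image_neg_eq_neg, ← image_neg_eq_neg, image_image, image_image]
  exact image_congr fun x hx => gMap_iterate_two_mul_neg n (hS hx)

lemma exists_neg_Icc_subset_image_gMap_iterate {c d : ℝ} (hcd : c < d)
    (hI : Icc c d ⊆ Icc (-1) 1) : ∃ a b : ℝ, ∃ m : ℕ, 0 ≤ a ∧ a < b ∧ b ≤ 1 ∧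
      Icc (-b) (-a) ⊆ gMap^[m] '' Icc c d := by
  have hc : -1 ≤ c := (hI (left_mem_Icc.2 hcd.le)).1
  have hd : d ≤ 1 := (hI (right_mem_Icc.2 hcd.le)).2
  rcases lt_or_ge c 0 with hc0 | hc0
  · refine ⟨-min d 0, -c, 0, by simp, neg_lt_neg (lt_min hcd hc0), by linarith, ?_⟩
    rw [neg_neg, neg_neg, Function.iterate_zero, image_id]
    exact Icc_subset_Icc_right (min_le_left _ _)
  · refine ⟨c, d, 1, hc0, hcd, hd, ?_⟩
    rw [Function.iterate_one, image_gMap_Icc_of_nonneg hc0]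

lemma exists_Icc_neg_one_zero_subset_image_gMap_iterate {c d : ℝ} (hcd : c < d)
    (hI : Icc c d ⊆ Icc (-1) 1) : ∃ N, Icc (-1) 0 ⊆ gMap^[N] '' Icc c d := by
  obtain ⟨a, b, m, ha, hab, hb, hm⟩ := exists_neg_Icc_subset_image_gMap_iterate hcd hI
  obtain ⟨n, hn⟩ := exists_Icc_subset_image_tent_iterate ha hab hb
  refine ⟨2 * n + m, ?_⟩
  have hab01 : Icc a b ⊆ Icc 0 1 := Icc_subset_Icc ha hb
  calc Icc (-1) 0 = -Icc (0 : ℝ) 1 := by rw [neg_Icc, neg_zero]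
    _ ⊆ -(tent^[n] '' Icc a b) := neg_subset_neg.2 hn
    _ = gMap^[2 * n] '' Icc (-b) (-a) := by rw [← image_gMap_iterate_two_mul_neg n hab01, neg_Icc]
    _ ⊆ gMap^[2 * n + m] '' Icc c d := by
      rw [Function.iterate_add, image_comp]
      exact image_mono hm

/-- `g` is topologically transitive on `[-1,1]`: for every pair of nonempty
(relatively) open subsets `U, V` of `[-1,1]` there exists a positive integer `n`
with `gⁿ(U) ∩ V ≠ ∅`. -/
theorem gMap_topologically_transitive :
    ∀ U V : Set ℝ, U ⊆ Set.Icc (-1 : ℝ) 1 → V ⊆ Set.Icc (-1 : ℝ) 1 →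
      (∃ U' : Set ℝ, IsOpen U' ∧ U = Set.Icc (-1 : ℝ) 1 ∩ U') →
      (∃ V' : Set ℝ, IsOpen V' ∧ V = Set.Icc (-1 : ℝ) 1 ∩ V') →
      U.Nonempty → V.Nonempty →
      ∃ n : ℕ, 0 < n ∧ ((gMap^[n] '' U) ∩ V).Nonempty := by
  rintro U V - hV ⟨U', hU', rfl⟩ - hne ⟨v, hv⟩
  obtain ⟨c, d, hcd, hcdU⟩ := exists_Icc_subset_inter_of_isOpen (by norm_num) hU' hne
  obtain ⟨N, hN⟩ :=
    exists_Icc_neg_one_zero_subset_image_gMap_iterate hcd (hcdU.trans inter_subset_left)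
  have hN₁ : Icc 0 1 ⊆ gMap^[N + 1] '' (Icc (-1) 1 ∩ U') := by
    rw [Function.iterate_succ', image_comp]
    exact Icc_zero_one_subset_image_gMap.trans (image_mono (hN.trans (image_mono hcdU)))
  have hN₂ : Icc (-1) 0 ⊆ gMap^[N + 2] '' (Icc (-1) 1 ∩ U') := by
    rw [Function.iterate_succ', image_comp, ← neg_zero, ← image_gMap_Icc_of_nonneg le_rfl]
    exact image_mono hN₁
  rcases le_total v 0 with hv0 | hv0
  · exact ⟨N + 2, by omega, v, hN₂ ⟨(hV hv).1, hv0⟩, hv⟩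
  · exact ⟨N + 1, by omega, v, hN₁ ⟨hv0, (hV hv).2⟩, hv⟩
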